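/- Let I_f be an O_f-ideal prime to m·f (for positive integers m, f), let J = I_f·Z_K and I_{mf} = J ∩ O_{mf}. Then I_{mf}·O_f = I_f. -/

import Mathlib

/-!
Since `I_f + mf·O_f = O_f` and `O_f` is integral over `ℤ`, lying over produces an integer
`a ∈ I_f` with `a + mf·c = 1`. Every `w` then splits as `w = a·w + c·(mf·w)`. For `w ∈ I_f` both
`a` and `mf·w` lie in `J ∩ O_{mf}`, giving `I_f ⊆ I_{mf}·O_f`; for `w ∈ J ∩ O_f` the term `a·w`
lies in `I_f` and so does `mf·w`, because `f·J ⊆ I_f`, giving the reverse inclusion.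
-/

open NumberField Pointwise

/-- The order `O_f = ℤ + f·ℤ_K` of conductor `f`. -/
noncomputable def order (K : Type*) [Field K] (f : ℕ) : Subalgebra ℤ K :=
  Algebra.adjoin ℤ ((f : K) • ((integralClosure ℤ K : Subalgebra ℤ K) : Set K))

/-- Otherwise a maximal ideal of `A` containing `I ∩ A` and `a` would lie under a prime of `R`
containing `I` and `a` (lying over). -/
theorem Ideal.comap_sup_span_singleton_eq_top {A R : Type*} [CommRing A] [CommRing R]
    [Algebra A R] [Algebra.IsIntegral A R] {I : Ideal R} {a : A}
    (h : I ⊔ Ideal.span {algebraMap A R a} = ⊤) :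
    I.comap (algebraMap A R) ⊔ Ideal.span {a} = ⊤ := by
  by_contra hne
  obtain ⟨P, hP, hle⟩ := Ideal.exists_le_maximal _ hne
  obtain ⟨Q, hIQ, hQ, hQP⟩ :=
    Ideal.exists_ideal_over_prime_of_isIntegral P I (le_sup_left.trans hle)
  have haQ : algebraMap A R a ∈ Q := by
    change a ∈ Q.comap (algebraMap A R)
    exact hQP ▸ hle (Ideal.mem_sup_right (Ideal.mem_span_singleton_self a))
  refine hQ.ne_top (eq_top_iff.mpr (h ▸ sup_le hIQ ?_))
  rwa [Ideal.span_le, Set.singleton_subset_iff]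

theorem Ideal.exists_intCast_mem_of_sup_span_eq_top {R : Type*} [CommRing R]
    [Algebra.IsIntegral ℤ R] {I : Ideal R} {N : ℕ} (h : I ⊔ Ideal.span {(N : R)} = ⊤) :
    ∃ a c : ℤ, a + N * c = 1 ∧ (a : R) ∈ I := by
  have hcomap := Ideal.comap_sup_span_singleton_eq_top (a := (N : ℤ)) (by simpa using h)
  obtain ⟨a, ha, _, hc, hac⟩ := Submodule.mem_sup.mp (hcomap ▸ Submodule.mem_top (x := 1))
  obtain ⟨c, rfl⟩ := Ideal.mem_span_singleton'.mp hc
  exact ⟨a, c, by rw [← hac, mul_comm], by simpa using ha⟩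

theorem Set.mul_eq_setOf_exists {M : Type*} [Mul M] (s t : Set M) :
    s * t = {z | ∃ x ∈ s, ∃ y ∈ t, z = x * y} := by
  ext z
  simp [Set.mem_mul, eq_comm]

section Order

variable {K : Type*} [Field K]

theorem order_le_integralClosure (f : ℕ) : order K f ≤ integralClosure ℤ K := by
  refine Algebra.adjoin_le ?_
  rintro _ ⟨z, hz, rfl⟩
  exact mul_mem (Subalgebra.natCast_mem _ f) hz

theorem natCast_mul_mem_order (n : ℕ) {z : K} (hz : z ∈ integralClosure ℤ K) :
    (n : K) * z ∈ order K n :=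
  Algebra.subset_adjoin ⟨z, hz, rfl⟩

theorem order_le_order_of_dvd {f n : ℕ} (h : f ∣ n) : order K n ≤ order K f := by
  obtain ⟨m, rfl⟩ := h
  refine Algebra.adjoin_le ?_
  rintro _ ⟨z, hz, rfl⟩
  simpa [mul_assoc] using natCast_mul_mem_order f (mul_mem (Subalgebra.natCast_mem _ m) hz)

instance (f : ℕ) : Algebra.IsIntegral ℤ (order K f) :=
  (Subalgebra.isIntegral_iff _).mpr fun _ hx => order_le_integralClosure f hx

end Order

section Extension

variable {K : Type*} [Field K] {f : ℕ} {I : Submodule ℤ K}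

theorem natCast_mul_mem_of_mem_mul_integralClosure
    (hI : ∀ r ∈ order K f, ∀ x ∈ I, r * x ∈ I) {x : K}
    (hx : x ∈ I * (integralClosure ℤ K).toSubmodule) : (f : K) * x ∈ I :=
  Submodule.mul_induction_on hx
    (fun i hi z hz ↦ by
      rw [mul_left_comm, mul_comm]
      exact hI _ (natCast_mul_mem_order f hz) i hi)
    (fun x y hx hy ↦ mul_add (f : K) x y ▸ I.add_mem hx hy)

theorem mem_of_mem_mul_integralClosure_of_mem_order
    (hI : ∀ r ∈ order K f, ∀ x ∈ I, r * x ∈ I) {N : ℕ} (hN : f ∣ N) {a c : ℤ}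
    (hac : a + N * c = 1) (ha : (a : K) ∈ I) {x : K}
    (hxJ : x ∈ I * (integralClosure ℤ K).toSubmodule) (hxR : x ∈ order K f) : x ∈ I := by
  obtain ⟨k, rfl⟩ := hN
  have hacK : (a : K) + f * k * c = 1 := by simpa using congrArg (Int.cast : ℤ → K) hac
  have hsplit : x = x * a + (c * k) • ((f : K) * x) := by
    rw [zsmul_eq_mul]
    push_cast
    linear_combination (-x) * hacK
  rw [hsplit]
  exact I.add_mem (hI x hxR _ ha) (I.smul_mem _ (natCast_mul_mem_of_mem_mul_integralClosure hI hxJ))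

theorem mul_inf_order_mul_order_eq
    (hIR : I ≤ (order K f).toSubmodule) (hI : ∀ r ∈ order K f, ∀ x ∈ I, r * x ∈ I)
    {N : ℕ} (hN : f ∣ N) {a c : ℤ} (hac : a + N * c = 1) (ha : (a : K) ∈ I) :
    (I * (integralClosure ℤ K).toSubmodule ⊓ (order K N).toSubmodule) * (order K f).toSubmodule
      = I := by
  apply le_antisymm
  · refine Submodule.mul_le.mpr fun x ⟨hxJ, hxS⟩ y hy ↦ ?_
    have hxyJ : x * y ∈ I * (integralClosure ℤ K).toSubmodule := by
      rw [← (Subalgebra.isIdempotentElem_toSubmodule _).eq, ← mul_assoc]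
      exact Submodule.mul_mem_mul hxJ (order_le_integralClosure f hy)
    exact mem_of_mem_mul_integralClosure_of_mem_order hI hN hac ha hxyJ
      (mul_mem (order_le_order_of_dvd hN hxS) hy)
  · intro w hw
    have haJ : (a : K) ∈ I * (integralClosure ℤ K).toSubmodule := by
      rw [← mul_one (a : K)]
      exact Submodule.mul_mem_mul ha (one_mem (integralClosure ℤ K))
    have hwJ : (N : K) * w ∈ I * (integralClosure ℤ K).toSubmodule :=
      mul_comm w (N : K) ▸ Submodule.mul_mem_mul hw (Subalgebra.natCast_mem _ N)
    have hwS : (N : K) * w ∈ order K N :=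
      natCast_mul_mem_order N (order_le_integralClosure f (hIR hw))
    have hacK : (a : K) + N * c = 1 := by simpa using congrArg (Int.cast : ℤ → K) hac
    have hsplit : w = a * w + (N * w) * c := by linear_combination (-w) * hacK
    rw [hsplit]
    exact add_mem (Submodule.mul_mem_mul ⟨haJ, Subalgebra.intCast_mem _ a⟩ (hIR hw))
      (Submodule.mul_mem_mul ⟨hwJ, hwS⟩ (Subalgebra.intCast_mem _ c))

end Extension

theorem stmt2_general (K : Type*) [Field K]
    (m f : ℕ)
    (If : Ideal ↥(order K f))
    (hprime : If ⊔ Ideal.span {((m * f : ℕ) : ↥(order K f))} = ⊤)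
    (Sf Jset Imf : Set K)
    (hSf : Sf = Subtype.val '' (If : Set ↥(order K f)))
    (hJ : Jset = (Submodule.span ℤ {z : K | ∃ x ∈ Sf,
        ∃ y ∈ ((integralClosure ℤ K : Subalgebra ℤ K) : Set K), z = x * y} : Submodule ℤ K))
    (hImf : Imf = Jset ∩ (order K (m * f) : Set K)) :
    ((Submodule.span ℤ {z : K | ∃ x ∈ Imf, ∃ y ∈ (order K f : Set K), z = x * y} :
        Submodule ℤ K) : Set K) = Sf := by
  obtain ⟨a, c, hac, ha⟩ := Ideal.exists_intCast_mem_of_sup_span_eq_top hprime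
  set I : Submodule ℤ K := (If.restrictScalars ℤ).map (order K f).val.toLinearMap
  have hIR : I ≤ (order K f).toSubmodule := by
    rintro _ ⟨x, -, rfl⟩
    exact x.2
  have hI : ∀ r ∈ order K f, ∀ x ∈ I, r * x ∈ I := by
    rintro r hr _ ⟨x, hx, rfl⟩
    exact ⟨⟨r, hr⟩ * x, If.mul_mem_left _ hx, rfl⟩
  have haI : (a : K) ∈ I := ⟨a, ha, rfl⟩
  have hSfI : Sf = I := hSf
  subst hJ hImf
  rw [← Set.mul_eq_setOf_exists, ← Set.mul_eq_setOf_exists, hSfI,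
    ← Subalgebra.coe_toSubmodule (integralClosure ℤ K), ← Submodule.mul_eq_span_mul_set,
    ← Subalgebra.coe_toSubmodule (order K (m * f)), ← Submodule.coe_inf,
    ← Subalgebra.coe_toSubmodule (order K f), ← Submodule.mul_eq_span_mul_set,
    mul_inf_order_mul_order_eq hIR hI (dvd_mul_left f m) hac haI]

/-- Let `I_f` be an `O_f`-ideal prime to `m·f`, let `J = I_f·ℤ_K` and
`I_{mf} = J ∩ O_{mf}`. Then `I_{mf}·O_f = I_f` (all computed as subsets of `K`,
with products of ideals realized as ℤ-spans of sets of pairwise products). -/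
theorem stmt2 (K : Type*) [Field K] [NumberField K]
    (h2 : Module.finrank ℚ K = 2) (himag : ∀ φ : K →+* ℝ, False)
    (m f : ℕ) (hm : 0 < m) (hf : 0 < f)
    (If : Ideal ↥(order K f))
    (hprime : If ⊔ Ideal.span {((m * f : ℕ) : ↥(order K f))} = ⊤)
    (Sf Jset Imf : Set K)
    (hSf : Sf = Subtype.val '' (If : Set ↥(order K f)))
    (hJ : Jset = (Submodule.span ℤ {z : K | ∃ x ∈ Sf,
        ∃ y ∈ ((integralClosure ℤ K : Subalgebra ℤ K) : Set K), z = x * y} : Submodule ℤ K))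
    (hImf : Imf = Jset ∩ (order K (m * f) : Set K)) :
    ((Submodule.span ℤ {z : K | ∃ x ∈ Imf, ∃ y ∈ (order K f : Set K), z = x * y} :
        Submodule ℤ K) : Set K) = Sf :=
  stmt2_general K m f If hprime Sf Jset Imf hSf hJ hImf
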